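/- arXiv:1107.2416 — 2 statements merged into one kernel-verified Lean document; each statement's English description precedes it below -/
import Mathlib

section
/- In the polynomial ring ℚ[t₁,t₂,t₃,t₄], the ideal generated by the three polynomials t₁t₃, t₃t₄, and t₂t₃ − t₃² is equal to the intersection of the principal ideal (t₃) with the ideal (t₁, t₄, t₂ − t₃). -/
/-!
Write `J = (t₁, t₄, t₂ − t₃)`. The given ideal is `t₃ J`, and `J` is prime: it is the kernel of
the substitution `t₁, t₄ ↦ 0`, `t₂ ↦ t₃` into the domain `ℚ[t₁,t₂,t₃,t₄]`, since every polynomial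
is congruent modulo `J` to its image. As `t₃ ∉ J`, a multiple `t₃ q` lies in `J` only if `q` does,
so `(t₃) ∩ J = t₃ J`.
-/

open MvPolynomial

theorem Ideal.IsPrime.span_singleton_inf_eq_mul {R : Type*} [CommRing R] {P : Ideal R}
    (hP : P.IsPrime) {x : R} (hx : x ∉ P) : Ideal.span {x} ⊓ P = Ideal.span {x} * P := by
  refine le_antisymm ?_ Ideal.mul_le_inf
  rintro _ ⟨hxq, hxqP⟩
  obtain ⟨q, rfl⟩ := Ideal.mem_span_singleton'.mp hxq
  have hqP : q ∈ P := (hP.mem_or_mem hxqP).resolve_right hx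
  exact Ideal.mem_span_singleton_mul.mpr ⟨q, hqP, mul_comm x q⟩

theorem AlgHom.ker_eq_of_comp_mkₐ_eq {R A : Type*} [CommRing R] [CommRing A] [Algebra R A]
    (φ : A →ₐ[R] A) (J : Ideal A) (hJ : J ≤ RingHom.ker φ)
    (hφ : (Ideal.Quotient.mkₐ R J).comp φ = Ideal.Quotient.mkₐ R J) :
    RingHom.ker φ = J := by
  refine le_antisymm (fun p hp => ?_) hJ
  have hmk : Ideal.Quotient.mk J p = 0 := by
    simpa [RingHom.mem_ker.mp hp] using (DFunLike.congr_fun hφ p).symm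
  exact Ideal.Quotient.eq_zero_iff_mem.mp hmk

noncomputable def lineRetraction : MvPolynomial (Fin 4) ℚ →ₐ[ℚ] MvPolynomial (Fin 4) ℚ :=
  aeval ![0, X 2, X 2, 0]

theorem span_le_ker_lineRetraction :
    Ideal.span {X 0, X 3, X 1 - X 2} ≤ RingHom.ker lineRetraction := by
  rw [Ideal.span_le]
  rintro p (rfl | rfl | rfl) <;> simp [lineRetraction]

theorem mkₐ_comp_lineRetraction :
    (Ideal.Quotient.mkₐ ℚ (Ideal.span {X 0, X 3, X 1 - X 2})).comp lineRetraction =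
      Ideal.Quotient.mkₐ ℚ (Ideal.span {X 0, X 3, X 1 - X 2}) := by
  refine MvPolynomial.algHom_ext fun i => ?_
  rw [AlgHom.comp_apply, Ideal.Quotient.mkₐ_eq_mk, eq_comm, Ideal.Quotient.eq]
  fin_cases i <;> simp [lineRetraction] <;> exact Ideal.subset_span (by simp)

theorem ker_lineRetraction :
    RingHom.ker lineRetraction = Ideal.span {X 0, X 3, X 1 - X 2} :=
  lineRetraction.ker_eq_of_comp_mkₐ_eq _ span_le_ker_lineRetraction mkₐ_comp_lineRetraction

theorem isPrime_span_X_zero_X_three_X_one_sub_X_two :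
    (Ideal.span {X 0, X 3, X 1 - X 2} : Ideal (MvPolynomial (Fin 4) ℚ)).IsPrime :=
  ker_lineRetraction ▸ RingHom.ker_isPrime _

theorem X_two_notMem_span_X_zero_X_three_X_one_sub_X_two :
    X 2 ∉ (Ideal.span {X 0, X 3, X 1 - X 2} : Ideal (MvPolynomial (Fin 4) ℚ)) := by
  rw [← ker_lineRetraction, RingHom.mem_ker]
  simp [lineRetraction, X_ne_zero]

theorem span_eq_span_X_two_mul :
    (Ideal.span {X 0 * X 2, X 2 * X 3, X 1 * X 2 - X 2 ^ 2} : Ideal (MvPolynomial (Fin 4) ℚ)) =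
      Ideal.span {X 2} * Ideal.span {X 0, X 3, X 1 - X 2} := by
  rw [Ideal.span_mul_span', Set.singleton_mul, Set.image_insert_eq, Set.image_insert_eq,
    Set.image_singleton]
  congr 2 <;> ring_nf

/-- In ℚ[t₁,t₂,t₃,t₄] (variables `X 0, X 1, X 2, X 3` standing for t₁,t₂,t₃,t₄),
the ideal (t₁t₃, t₃t₄, t₂t₃ − t₃²) equals (t₃) ∩ (t₁, t₄, t₂ − t₃). -/
theorem ideal_eq_intersection :
    (Ideal.span {X 0 * X 2, X 2 * X 3, X 1 * X 2 - X 2 ^ 2} :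
        Ideal (MvPolynomial (Fin 4) ℚ))
      = Ideal.span {X 2} ⊓ Ideal.span {X 0, X 3, X 1 - X 2} := by
  rw [span_eq_span_X_two_mul,
    isPrime_span_X_zero_X_three_X_one_sub_X_two.span_singleton_inf_eq_mul
      X_two_notMem_span_X_zero_X_three_X_one_sub_X_two]
end

section
/- Let S be a commutative ring, let F⁰ : Sᵐ → S and R⁰ : Sˡ → Sᵐ be S-linear maps with F⁰ ∘ R⁰ = 0 and with the image of R⁰ equal to the kernel of F⁰, and let I ⊆ S be the ideal that is the image of F⁰. Suppose φ₁,…,φₙ : Sᵐ → S are S-linear maps such that for each i the composition φᵢ ∘ R⁰ : Sˡ → S has image contained in I. Then there exist S-linear maps ρ₁,…,ρₙ : Sˡ → Sᵐ such that F⁰ ∘ ρᵢ = −(φᵢ ∘ R⁰) for all i; consequently, in the polynomial ring A = S[t₁,…,tₙ] with 𝔪 = (t₁,…,tₙ), the A-linear maps F¹ = F⁰ + Σᵢ tᵢφᵢ : Aᵐ → A and R¹ = R⁰ + Σᵢ tᵢρᵢ : Aˡ → Aᵐ (obtained by base change) satisfy F¹ ∘ R¹ ≡ 0 modulo 𝔪²,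 i.e. every entry of the composition F¹ ∘ R¹ lies in the ideal 𝔪²·A. -/
/-!
Each entry of `-(φᵢ * R⁰)` lies in the ideal spanned by the entries of `F⁰`, so the columns of
`ρᵢ` can be taken to be coefficient vectors expressing them. Expanding `F¹ * R¹`, the constant
term `F⁰ * R⁰` vanishes and so does the coefficient `F⁰ * ρᵢ + φᵢ * R⁰` of each `tᵢ`, leaving only
the terms `tᵢ tⱼ φᵢ ρⱼ`.
-/

open MvPolynomial

namespace Matrix

theorem exists_mul_eq_of_mem_span_row {S : Type*} [CommSemiring S] {m l : Type*}
    [Fintype m] (F : Matrix (Fin 1) m S) (G : Matrix (Fin 1) l S)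
    (hG : ∀ j, G 0 j ∈ Ideal.span (Set.range (F 0))) :
    ∃ ρ : Matrix m l S, F * ρ = G := by
  choose c hc using fun j => (Submodule.mem_span_range_iff_exists_fun S).mp (hG j)
  refine ⟨Matrix.of fun k j => c j k, ?_⟩
  ext a j
  rw [Fin.fin_one_eq_zero a, ← hc j, Matrix.mul_apply]
  simp only [Matrix.of_apply, smul_eq_mul, mul_comm]

variable {A ι p q r : Type*} [CommRing A] [Fintype ι] [Fintype q]

theorem sum_smul_mul_sum_smul (t : ι → A) (φ : ι → Matrix p q A)
    (ρ : ι → Matrix q r A) :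
    (∑ i, t i • φ i) * (∑ i, t i • ρ i) = ∑ i, ∑ j, (t i * t j) • (φ i * ρ j) := by
  rw [Matrix.sum_mul]
  refine Finset.sum_congr rfl fun i _ => ?_
  simp only [Matrix.smul_mul, Matrix.mul_sum, Matrix.mul_smul, smul_smul, mul_comm]

theorem add_sum_smul_mul_add_sum_smul (t : ι → A) (F : Matrix p q A) (R : Matrix q r A)
    (φ : ι → Matrix p q A) (ρ : ι → Matrix q r A) :
    (F + ∑ i, t i • φ i) * (R + ∑ i, t i • ρ i) =
      F * R + ∑ i, t i • (F * ρ i + φ i * R) + ∑ i, ∑ j, (t i * t j) • (φ i * ρ j) := by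
  rw [Matrix.add_mul, Matrix.mul_add, Matrix.mul_add, sum_smul_mul_sum_smul]
  simp only [Matrix.mul_sum, Matrix.sum_mul, Matrix.mul_smul, Matrix.smul_mul, smul_add,
    Finset.sum_add_distrib]
  abel

theorem sum_sum_smul_apply_mem_span_sq (t : ι → A) (M : ι → ι → Matrix p r A) (a : p)
    (b : r) :
    (∑ i, ∑ j, (t i * t j) • M i j) a b ∈ Ideal.span (Set.range t) ^ 2 := by
  simp only [Matrix.sum_apply, Matrix.smul_apply, smul_eq_mul]
  refine Ideal.sum_mem _ fun i _ => Ideal.sum_mem _ fun j _ => Ideal.mul_mem_right _ _ ?_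
  rw [sq]
  exact Ideal.mul_mem_mul (Ideal.subset_span ⟨i, rfl⟩) (Ideal.subset_span ⟨j, rfl⟩)

theorem add_sum_smul_mul_add_sum_smul_apply_mem_span_sq (t : ι → A) (F : Matrix p q A)
    (R : Matrix q r A) (φ : ι → Matrix p q A) (ρ : ι → Matrix q r A) (hFR : F * R = 0)
    (hρ : ∀ i, F * ρ i + φ i * R = 0) (a : p) (b : r) :
    ((F + ∑ i, t i • φ i) * (R + ∑ i, t i • ρ i)) a b ∈ Ideal.span (Set.range t) ^ 2 := by
  rw [add_sum_smul_mul_add_sum_smul, hFR]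
  simp only [hρ, smul_zero, Finset.sum_const_zero, zero_add]
  exact sum_sum_smul_apply_mem_span_sq t _ a b

end Matrix

theorem first_order_deformation_equation_general (S : Type*) [CommRing S] (m l n : ℕ)
    (F0 : Matrix (Fin 1) (Fin m) S) (R0 : Matrix (Fin m) (Fin l) S)
    (hFR : F0 * R0 = 0)
    (I : Ideal S) (hI : I = Ideal.span (Set.range (F0 0)))
    (φ : Fin n → Matrix (Fin 1) (Fin m) S)
    (hφ : ∀ i, ∀ j, (φ i * R0) 0 j ∈ I) :
    ∃ ρ : Fin n → Matrix (Fin m) (Fin l) S,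
      (∀ i, F0 * ρ i = -(φ i * R0)) ∧
      (∀ j, (((F0.map (C : S →+* MvPolynomial (Fin n) S) + ∑ i, (X i : MvPolynomial (Fin n) S) • (φ i).map C) *
              (R0.map (C : S →+* MvPolynomial (Fin n) S) + ∑ i, (X i : MvPolynomial (Fin n) S) • (ρ i).map C) :
              Matrix (Fin 1) (Fin l) (MvPolynomial (Fin n) S))) 0 j
          ∈ (Ideal.span (Set.range (X : Fin n → MvPolynomial (Fin n) S))) ^ 2) := by
  subst hI
  choose ρ hρ using fun i => Matrix.exists_mul_eq_of_mem_span_row F0 (-(φ i * R0))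
    fun j => neg_mem (hφ i j)
  refine ⟨ρ, hρ, fun j => Matrix.add_sum_smul_mul_add_sum_smul_apply_mem_span_sq _ _ _ _ _
    ?_ (fun i => ?_) 0 j⟩
  · rw [← Matrix.map_mul, hFR, Matrix.map_zero _ (map_zero C)]
  · rw [← Matrix.map_mul, ← Matrix.map_mul, ← Matrix.map_add _ (map_add C), hρ i,
      neg_add_cancel, Matrix.map_zero _ (map_zero C)]

/-- First-order step of the Massey product algorithm.  Linear maps `Sᵐ → S` and
`Sˡ → Sᵐ` are represented by the matrices `F0` (of size 1 × m) and `R0` (of size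
m × l); composition of maps corresponds to matrix multiplication.  Given that
`F⁰ ∘ R⁰ = 0`, that the image of `R⁰` is the kernel of `F⁰`, that `I` is the image
of `F⁰` (the ideal spanned by its entries), and first-order deformations
`φ₁, …, φₙ` with `φᵢ ∘ R⁰` having image in `I`, there are lifts `ρᵢ` of the
relations with `F⁰ ∘ ρᵢ = −(φᵢ ∘ R⁰)`, and in `A = S[t₁,…,tₙ]` the maps
`F¹ = F⁰ + Σ tᵢ φᵢ` and `R¹ = R⁰ + Σ tᵢ ρᵢ` satisfy `F¹ ∘ R¹ ≡ 0 mod 𝔪²`, where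
`𝔪 = (t₁,…,tₙ)`. -/
theorem first_order_deformation_equation (S : Type*) [CommRing S] (m l n : ℕ)
    (F0 : Matrix (Fin 1) (Fin m) S) (R0 : Matrix (Fin m) (Fin l) S)
    (hFR : F0 * R0 = 0)
    (hker : ∀ v : Fin m → S, F0.mulVec v = 0 ↔ ∃ w : Fin l → S, R0.mulVec w = v)
    (I : Ideal S) (hI : I = Ideal.span (Set.range (F0 0)))
    (φ : Fin n → Matrix (Fin 1) (Fin m) S)
    (hφ : ∀ i, ∀ j, (φ i * R0) 0 j ∈ I) :
    ∃ ρ : Fin n → Matrix (Fin m) (Fin l) S,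
      (∀ i, F0 * ρ i = -(φ i * R0)) ∧
      (∀ j, (((F0.map (C : S →+* MvPolynomial (Fin n) S) + ∑ i, (X i : MvPolynomial (Fin n) S) • (φ i).map C) *
              (R0.map (C : S →+* MvPolynomial (Fin n) S) + ∑ i, (X i : MvPolynomial (Fin n) S) • (ρ i).map C) :
              Matrix (Fin 1) (Fin l) (MvPolynomial (Fin n) S))) 0 j
          ∈ (Ideal.span (Set.range (X : Fin n → MvPolynomial (Fin n) S))) ^ 2) :=
  first_order_deformation_equation_general S m l n F0 R0 hFR I hI φ hφ
end
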